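/- (Identity (9) of the finite basis.) For all x, y, z ∈ ZMod 12: f x (2*y + z) = f x z − f y z + f y (2*x + z). -/
import Mathlib


open scoped Classical in
/-- `f x y = 4` if `x` is odd and `y ∈ {0,4,8}`, and `f x y = 0` otherwise. -/
noncomputable def f (x y : ZMod 12) : ZMod 12 :=
  if Odd x ∧ y ∈ ({0, 4, 8} : Set (ZMod 12)) then 4 else 0

lemma odd_iff_val (x : ZMod 12) : Odd x ↔ x.val % 2 = 1 := by
  constructor
  · rintro ⟨k, rfl⟩
    revert k
    decide
  · intro h
    refine ⟨((x.val / 2 : ℕ) : ZMod 12), ?_⟩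
    have h1 : ((x.val : ℕ) : ZMod 12) = x := by
      simp [ZMod.natCast_val, ZMod.cast_id]
    have h2 : ((x.val : ℕ) : ZMod 12) = ((2 * (x.val / 2) + 1 : ℕ) : ZMod 12) := by
      congr 1; omega
    conv_lhs => rw [← h1, h2]
    push_cast
    ring

lemma f_eq (x y : ZMod 12) :
    f x y = if (x.val % 2 = 1 ∧ (y = 0 ∨ y = 4 ∨ y = 8)) then 4 else 0 := by
  unfold f
  have h : (Odd x ∧ y ∈ ({0, 4, 8} : Set (ZMod 12))) ↔
      (x.val % 2 = 1 ∧ (y = 0 ∨ y = 4 ∨ y = 8)) := by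
    rw [odd_iff_val]
    simp [Set.mem_insert_iff]
  simp only [h]

theorem stmt_18 :
    ∀ x y z : ZMod 12,
      f x (2 * y + z) = f x z - f y z + f y (2 * x + z) := by
  intro x y z
  simp only [f_eq]
  revert x y z
  decide
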